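/- arXiv:2502.18728 — 4 statements merged into one kernel-verified Lean document; each statement's English description precedes it below -/
import Mathlib

section
/- Let V be a finite type of Boolean variables, let Rwd ⊆ V be a designated set of reward variables, let Pr : V → Bool → ℝ assign probabilities to literals of non-reward variables, and let U : V → ℝ assign utilities to reward variables. Define weights w : V → Bool → ℝ[ε] (dual numbers over ℝ) by: w v b = Pr v b (with zero ε-part) for v ∉ Rwd, and w v true = 1 + (U v)·ε, w v false = 1 for v ∈ Rwd. Then for every decidable predicate φ on total assignments σ : V → Bool, the ε-part of AMC(φ, w) equals ∑_{σ : V → Bool, φ σ} ( ∏_{v ∉ Rwd} Pr v (σ v) ) · ( ∑_{v ∈ Rwd, σ v = true} U v ), i.e., the algebraic model count over the expectation semiring computes the expected utility of the formula. -/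
open scoped Classical DualNumber

/-- The algebraic model count of a formula `φ` on total assignments
`σ : V → Bool` with literal weights `w` valued in a commutative semiring:
`AMC(φ, w) = ∑_{σ ⊨ φ} ∏_{v ∈ V} w v (σ v)`. -/
noncomputable def AMC {V : Type*} [Fintype V] [DecidableEq V] {R : Type*} [CommSemiring R]
    (φ : (V → Bool) → Prop) (w : V → Bool → R) : R :=
  ∑ σ ∈ Finset.univ.filter φ, ∏ v, w v (σ v)

/-- Product of dual numbers of the form `1 + a • ε`. -/
lemma prod_one_add_smul_eps {V : Type*} (s : Finset V) (f : V → ℝ) :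
    (∏ v ∈ s, (1 + f v • ε) : DualNumber ℝ) = 1 + (∑ v ∈ s, f v) • ε := by
  classical
  induction s using Finset.induction with
  | empty => simp
  | insert a s h ih =>
    rw [Finset.prod_insert h, ih, Finset.sum_insert h]
    ext <;> simp [TrivSqZeroExt.fst_mul, TrivSqZeroExt.snd_mul] <;> ring

/-- **AMC invariant (Theorem A.2)**: with probabilistic variables weighted by
their probabilities (no utility part) and reward variables weighted by
`1 + U·ε` when true and `1` when false, the ε-part (expected-utility
component) of the algebraic model count over the expectation semiring
(modeled as the dual numbers `ℝ[ε]`) is the expected utility of the formula. -/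
theorem amc_invariant {V : Type*} [Fintype V] [DecidableEq V]
    (Rwd : Finset V) (Pr : V → Bool → ℝ) (U : V → ℝ)
    (w : V → Bool → DualNumber ℝ)
    (hprob : ∀ v ∉ Rwd, ∀ b, w v b = TrivSqZeroExt.inl (Pr v b))
    (hrwdT : ∀ v ∈ Rwd, w v true = 1 + (U v) • ε)
    (hrwdF : ∀ v ∈ Rwd, w v false = 1)
    (φ : (V → Bool) → Prop) [DecidablePred φ] :
    (AMC φ w).snd =
      ∑ σ ∈ Finset.univ.filter φ,
        (∏ v ∈ Rwdᶜ, Pr v (σ v)) *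
          (∑ v ∈ Rwd.filter (fun v => σ v = true), U v) := by
  rw [AMC, TrivSqZeroExt.snd_sum]
  refine Finset.sum_congr (by congr) fun σ _ => ?_
  have h1 : (∏ v, w v (σ v)) =
      (∏ v ∈ Rwdᶜ, w v (σ v)) * ∏ v ∈ Rwd, w v (σ v) := by
    rw [Finset.prod_compl_mul_prod]
  have h2 : (∏ v ∈ Rwdᶜ, w v (σ v)) =
      TrivSqZeroExt.inl (∏ v ∈ Rwdᶜ, Pr v (σ v)) := by
    rw [show (TrivSqZeroExt.inl (∏ v ∈ Rwdᶜ, Pr v (σ v)) : DualNumber ℝ)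
        = ∏ v ∈ Rwdᶜ, TrivSqZeroExt.inl (Pr v (σ v)) from
      map_prod (TrivSqZeroExt.inlHom ℝ ℝ) _ _]
    exact Finset.prod_congr rfl fun v hv => hprob v (Finset.mem_compl.mp hv) _
  have h3 : (∏ v ∈ Rwd, w v (σ v)) =
      1 + (∑ v ∈ Rwd.filter (fun v => σ v = true), U v) • ε := by
    rw [Finset.sum_filter, ← prod_one_add_smul_eps]
    refine Finset.prod_congr rfl fun v hv => ?_
    cases h : σ v with
    | true => simp [hrwdT v hv]
    | false => simp [hrwdF v hv]
  rw [h1, h2, h3]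
  simp [TrivSqZeroExt.snd_mul]
end

section
/- Let V₁ and V₂ be disjoint finite types of Boolean variables, let w be a weight function on literals of V₁ ⊕ V₂ with values in the dual numbers ℝ[ε], let φ be a decidable predicate on assignments V₁ → Bool and ψ a decidable predicate on assignments V₂ → Bool. Then AMC over V₁ ⊕ V₂ of the conjunction satisfies AMC(φ ∧ ψ, w) = AMC(φ, w) · AMC(ψ, w), and consequently its ε-part (expected-utility component) equals fst(AMC(φ,w)) · snd(AMC(ψ,w)) + snd(AMC(φ,w)) · fst(AMC(ψ,w)), where fst and snd denote the real part and ε-part respectively. -/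
open scoped Classical DualNumber

theorem amc_mul_aux {V₁ V₂ : Type*} [Fintype V₁] [Fintype V₂]
    [DecidableEq V₁] [DecidableEq V₂] {R : Type*} [CommSemiring R]
    (w : V₁ ⊕ V₂ → Bool → R)
    (φ : (V₁ → Bool) → Prop) (ψ : (V₂ → Bool) → Prop)
    [DecidablePred φ] [DecidablePred ψ] :
    AMC (fun σ : V₁ ⊕ V₂ → Bool =>
          φ (fun v => σ (Sum.inl v)) ∧ ψ (fun v => σ (Sum.inr v))) w =
        AMC φ (fun v b => w (Sum.inl v) b) * AMC ψ (fun v b => w (Sum.inr v) b) := by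
  unfold AMC
  rw [Finset.sum_mul_sum, ← Finset.sum_product']
  refine Finset.sum_nbij' (fun σ => (fun v => σ (Sum.inl v), fun v => σ (Sum.inr v)))
    (fun p => Sum.elim p.1 p.2) ?_ ?_ ?_ ?_ ?_
  · intro σ hσ
    simp only [Finset.mem_filter, Finset.mem_univ, true_and] at hσ ⊢
    rw [Finset.mem_product]
    simp [hσ.1, hσ.2]
  · intro p hp
    simp only [Finset.mem_product, Finset.mem_filter, Finset.mem_univ, true_and] at hp ⊢
    exact ⟨hp.1, hp.2⟩
  · intro σ _; funext v; cases v <;> rfl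
  · intro p _; rfl
  · intro σ _
    rw [Fintype.prod_sum_type]

/-- **Lemma B.3 ('independent conjunction of expected utilities')**: for
formulas `φ` and `ψ` over disjoint sets of variables (modeled by the sum type
`V₁ ⊕ V₂`) with weights in the expectation semiring (modeled by the dual
numbers `ℝ[ε]`), the AMC of their conjunction is the product of their AMCs,
and consequently its ε-part (expected-utility component) is
`fst(AMC φ) · snd(AMC ψ) + snd(AMC φ) · fst(AMC ψ)`. -/
theorem amc_indep_conj_eu {V₁ V₂ : Type*} [Fintype V₁] [Fintype V₂]
    [DecidableEq V₁] [DecidableEq V₂]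
    (w : V₁ ⊕ V₂ → Bool → DualNumber ℝ)
    (φ : (V₁ → Bool) → Prop) (ψ : (V₂ → Bool) → Prop)
    [DecidablePred φ] [DecidablePred ψ] :
    (AMC (fun σ : V₁ ⊕ V₂ → Bool =>
          φ (fun v => σ (Sum.inl v)) ∧ ψ (fun v => σ (Sum.inr v))) w =
        AMC φ (fun v b => w (Sum.inl v) b) * AMC ψ (fun v b => w (Sum.inr v) b)) ∧
    (AMC (fun σ : V₁ ⊕ V₂ → Bool =>
          φ (fun v => σ (Sum.inl v)) ∧ ψ (fun v => σ (Sum.inr v))) w).snd =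
        (AMC φ (fun v b => w (Sum.inl v) b)).fst *
            (AMC ψ (fun v b => w (Sum.inr v) b)).snd +
          (AMC φ (fun v b => w (Sum.inl v) b)).snd *
            (AMC ψ (fun v b => w (Sum.inr v) b)).fst := by
  have h := amc_mul_aux w φ ψ
  refine ⟨h, ?_⟩
  rw [h, TrivSqZeroExt.snd_mul]
  simp [mul_comm]
end

section
/- Let V be a finite type of Boolean variables and let R_X, R_Y ⊆ V be disjoint sets of reward variables. Let w : V → Bool → ℝ[ε] be a weight function such that: the ε-part of w v b is 0 whenever v ∉ R_X ∪ R_Y (probabilistic variables carry no utility), for every r ∈ R_X ∪ R_Y the real part of w r b is 1 for both b (reward variables carry probability 1), and the ε-part of w r false is 0. For a set S ⊆ V and assignment σ, write ¬R_S(σ) for the condition that σ v = false for all v ∈ S. Then for all decidable predicates φ, ψ on total assignments σ : V → Bool, the ε-part of AMC(σ ↦ (φ σ ∧ ¬R_{R_Y}(σ)) ∨ (ψ σ ∧ ¬R_{R_X}(σ)), w) equals the ε-part of AMC(σ ↦ φ σ ∧ ¬R_{R_Y}(σ), w) plus the ε-part of AMC(σ ↦ ψ σ ∧ ¬R_{R_X}(σ),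 w). -/
open scoped Classical DualNumber

lemma snd_prod_zero {ι : Type*} (s : Finset ι) (f : ι → DualNumber ℝ)
    (h : ∀ i ∈ s, (f i).snd = 0) : (∏ i ∈ s, f i).snd = 0 := by
  induction s using Finset.cons_induction with
  | empty => simp
  | cons a s ha ih =>
    rw [Finset.prod_cons, TrivSqZeroExt.snd_mul]
    simp [h a (Finset.mem_cons_self a s), ih fun i hi => h i (Finset.mem_cons_of_mem hi)]

/-- `¬R_S(σ)`: all reward variables in `S` are assigned false by `σ`. -/
def NegAll {V : Type*} (S : Finset V) (σ : V → Bool) : Prop :=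
  ∀ v ∈ S, σ v = false

/-- **Lemma B.4 ('additive expected utility')**: if `R_X` and `R_Y` are
disjoint sets of reward variables, all non-reward variables carry no utility
(ε-part 0), all reward variables carry probability 1 (real part 1), and
negated reward literals carry no utility, then the ε-part
(expected-utility component) of
`AMC((φ ∧ ¬R_{R_Y}) ∨ (ψ ∧ ¬R_{R_X}), w)` is the sum of the ε-parts of
`AMC(φ ∧ ¬R_{R_Y}, w)` and `AMC(ψ ∧ ¬R_{R_X}, w)`. -/
theorem amc_additive_eu {V : Type*} [Fintype V] [DecidableEq V]
    (RX RY : Finset V) (hdisj : Disjoint RX RY)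
    (w : V → Bool → DualNumber ℝ)
    (hprob : ∀ v, v ∉ RX ∪ RY → ∀ b, (w v b).snd = 0)
    (hrwd1 : ∀ r ∈ RX ∪ RY, ∀ b, (w r b).fst = 1)
    (hrwd2 : ∀ r ∈ RX ∪ RY, (w r false).snd = 0)
    (φ ψ : (V → Bool) → Prop) [DecidablePred φ] [DecidablePred ψ] :
    (AMC (fun σ => (φ σ ∧ NegAll RY σ) ∨ (ψ σ ∧ NegAll RX σ)) w).snd =
      (AMC (fun σ => φ σ ∧ NegAll RY σ) w).snd +
        (AMC (fun σ => ψ σ ∧ NegAll RX σ) w).snd := by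
  classical
  have hsum := Finset.sum_union_inter
    (s₁ := Finset.univ.filter (fun σ => φ σ ∧ NegAll RY σ))
    (s₂ := Finset.univ.filter (fun σ => ψ σ ∧ NegAll RX σ))
    (f := fun σ : V → Bool => ∏ v, w v (σ v))
  rw [← Finset.filter_or, ← Finset.filter_and] at hsum
  have hinter : (∑ σ ∈ Finset.univ.filter
      (fun σ => (φ σ ∧ NegAll RY σ) ∧ (ψ σ ∧ NegAll RX σ)),
      ∏ v, w v (σ v)).snd = 0 := by
    rw [TrivSqZeroExt.snd_sum]
    apply Finset.sum_eq_zero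
    intro σ hσ
    rw [Finset.mem_filter] at hσ
    apply snd_prod_zero
    intro v _
    by_cases hv : v ∈ RX ∪ RY
    · have : σ v = false := by
        rcases Finset.mem_union.mp hv with h | h
        · exact hσ.2.2.2 v h
        · exact hσ.2.1.2 v h
      rw [this]
      exact hrwd2 v hv
    · exact hprob v hv _
  have := congrArg TrivSqZeroExt.snd hsum
  rw [TrivSqZeroExt.snd_add, TrivSqZeroExt.snd_add, hinter, add_zero] at this
  unfold AMC
  convert this using 3 <;> congr!
end

section
/- Let V be a finite type of Boolean variables with a designated subset X ⊆ V of branch variables and complement Y = V \ X. Let R be a commutative semiring equipped with a partial order that is a join-semilattice and in which addition is monotone (a ≤ b and c ≤ d implies a + c ≤ b + d). Let w : V → Bool → R be a weight function and φ a decidable predicate on total assignments V → Bool. Let D ⊆ X, let P : assignment of Boolean values to the variables in D (a partial policy), and let T : X → Bool agree with P on D (a completion of P). Then ∑_{σ : V → Bool, φ σ and σ agrees with T on X} ∏_{v ∈ V} w v (σ v) ≤ ∑_{a : Y → Bool} sup_{s : X → Bool, s agrees with P on D} ( if φ(s ⊎ a) then ∏_{v ∈ V} w v ((s ⊎ a)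 v) else 0 ), where s ⊎ a denotes the assignment on V combining s on X and a on Y, and the supremum is the finite join over the nonempty set of assignments s agreeing with P on D. -/
open scoped Classical

private lemma sum_le_sum_of_hadd {ι : Type*} {R : Type*} [AddCommMonoid R] [Preorder R]
    (hadd : ∀ a b c d : R, a ≤ b → c ≤ d → a + c ≤ b + d)
    (s : Finset ι) (f g : ι → R) (h : ∀ i ∈ s, f i ≤ g i) :
    ∑ i ∈ s, f i ≤ ∑ i ∈ s, g i := by
  induction s using Finset.cons_induction with
  | empty => simp
  | cons a s ha ih =>
    rw [Finset.sum_cons, Finset.sum_cons]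
    exact hadd _ _ _ _ (h a (Finset.mem_cons_self a s))
      (ih fun i hi => h i (Finset.mem_cons_of_mem hi))

/-- **Theorem 3.6 ('ub correctness')**: Let `V` be a finite set of Boolean
variables with branch variables `X ⊆ V` (complement `Y = V \ X`). Let `R` be
a commutative semiring with a join-semilattice partial order in which
addition is monotone. Let `P` be a partial policy on `D ⊆ X` and `T` a
completion of `P` (a total assignment to `X` agreeing with `P` on `D`).
Then the weighted model count of `φ` restricted to assignments agreeing with
`T` on `X` is dominated by the sum over assignments `a` to `Y` of the join,
over completions `s` of `P`, of the weight of the combined assignment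
`s ⊎ a` (if it satisfies `φ`, else `0`). This is the quantity computed by
the upper-bound procedure `ub`. -/
theorem ub_correctness {V : Type*} [Fintype V] [DecidableEq V]
    {R : Type*} [CommSemiring R] [SemilatticeSup R]
    (hadd : ∀ a b c d : R, a ≤ b → c ≤ d → a + c ≤ b + d)
    (X D : Finset V) (hDX : D ⊆ X)
    (w : V → Bool → R) (φ : (V → Bool) → Prop) [DecidablePred φ]
    (P : V → Bool)
    (T : {v // v ∈ X} → Bool) (hT : ∀ v : {v // v ∈ X}, v.1 ∈ D → T v = P v.1)
    (hne : (Finset.univ.filter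
        (fun s : {v // v ∈ X} → Bool => ∀ v : {v // v ∈ X}, v.1 ∈ D → s v = P v.1)).Nonempty) :
    (∑ σ ∈ Finset.univ.filter
        (fun σ : V → Bool => φ σ ∧ ∀ v : {v // v ∈ X}, σ v.1 = T v),
      ∏ v, w v (σ v))
    ≤ ∑ a : {v // v ∉ X} → Bool,
        (Finset.univ.filter
            (fun s : {v // v ∈ X} → Bool =>
              ∀ v : {v // v ∈ X}, v.1 ∈ D → s v = P v.1)).sup' hne
          (fun s =>
            if φ (fun v => if h : v ∈ X then s ⟨v, h⟩ else a ⟨v, h⟩) then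
              ∏ v, w v (if h : v ∈ X then s ⟨v, h⟩ else a ⟨v, h⟩)
            else 0) := by
  classical
  set g : ({v // v ∉ X} → Bool) → (V → Bool) :=
    fun a v => if h : v ∈ X then T ⟨v, h⟩ else a ⟨v, h⟩ with hg
  have key : (∑ σ ∈ Finset.univ.filter
        (fun σ : V → Bool => φ σ ∧ ∀ v : {v // v ∈ X}, σ v.1 = T v),
      ∏ v, w v (σ v))
      = ∑ a : {v // v ∉ X} → Bool,
          (if φ (g a) then ∏ v, w v (g a v) else 0) := by
    rw [← Finset.sum_filter]
    refine Finset.sum_nbij' (fun σ => fun v : {v // v ∉ X} => σ v.1) g ?_ ?_ ?_ ?_ ?_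
    · intro σ hσ
      simp only [Finset.mem_filter, Finset.mem_univ, true_and] at hσ ⊢
      have : g (fun v : {v // v ∉ X} => σ v.1) = σ := by
        funext v
        by_cases h : v ∈ X
        · simp [hg, h, hσ.2 ⟨v, h⟩]
        · simp [hg, h]
      rw [this]; exact hσ.1
    · intro a ha
      simp only [Finset.mem_filter, Finset.mem_univ, true_and] at ha ⊢
      refine ⟨ha, fun v => ?_⟩
      simp [hg, v.2]
    · intro σ hσ
      simp only [Finset.mem_filter, Finset.mem_univ, true_and] at hσ
      funext v
      by_cases h : v ∈ X
      · simp [hg, h, hσ.2 ⟨v, h⟩]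
      · simp [hg, h]
    · intro a ha
      funext v
      simp [hg, v.2]
    · intro σ hσ
      simp only [Finset.mem_filter, Finset.mem_univ, true_and] at hσ
      have : g (fun v : {v // v ∉ X} => σ v.1) = σ := by
        funext v
        by_cases h : v ∈ X
        · simp [hg, h, hσ.2 ⟨v, h⟩]
        · simp [hg, h]
      rw [this]
  rw [key]
  refine sum_le_sum_of_hadd hadd _ _ _ ?_
  intro a _
  have hmem : T ∈ Finset.univ.filter
      (fun s : {v // v ∈ X} → Bool => ∀ v : {v // v ∈ X}, v.1 ∈ D → s v = P v.1) := by
    simp only [Finset.mem_filter, Finset.mem_univ, true_and]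
    exact hT
  exact Finset.le_sup'
    (fun s : {v // v ∈ X} → Bool =>
      if φ (fun v => if h : v ∈ X then s ⟨v, h⟩ else a ⟨v, h⟩) then
        ∏ v, w v (if h : v ∈ X then s ⟨v, h⟩ else a ⟨v, h⟩)
      else 0) hmem
end
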